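/- Let $Q \in \mathbb{C}^{N \times t'}$ be full rank with SVD $Q = \Phi_Q \begin{pmatrix} \Sigma_Q \\ 0 \end{pmatrix} \Psi_Q^H$, where $\Phi_Q = (\Phi_Q^\parallel, \Phi_Q^\perp)$ with $\Phi_Q^\parallel$ the first $t'$ columns. Let $H \in \mathbb{C}^{N \times t}$ with $(\Phi_Q^\perp)^H H$ full rank, and let $V_{10} = (\Phi_Q^\perp)^H H M^\dagger \Phi_M^\parallel$ for suitable full-rank $M$ with SVD factor $\Phi_M^\parallel$. Then the projection identity $\Phi_Q^\perp P_{V_{10}}^\perp (\Phi_Q^\perp)^H = P_Q^\perp - P_{P_Q^\perp H}^\parallel$ holds, where $P_X^\parallel$ ($P_X^\perp$) denote the orthogonal projections onto the column space of $X$ (its orthogonal complement). -/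
import Mathlib


open Matrix

/-- Projection identity `Φ_Q^⊥ P_{V₁₀}^⊥ (Φ_Q^⊥)ᴴ = P_Q^⊥ - P_{P_Q^⊥ H}^∥`,
where `Φ_Q^⊥` has orthonormal columns spanning the orthogonal complement of the
column space of `Q`, and `V₁₀ = (Φ_Q^⊥)ᴴ H K` with `K` invertible
(representing `M† Φ_M^∥`). -/
theorem perp_projection_identity {N t t' p : ℕ}
    (Q : Matrix (Fin N) (Fin t') ℂ) [Invertible (Qᴴ * Q)]
    (Φperp : Matrix (Fin N) (Fin p) ℂ)
    (hortho : Φperpᴴ * Φperp = 1)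
    (hspan : Φperp * Φperpᴴ = 1 - Q * (Qᴴ * Q)⁻¹ * Qᴴ)
    (H : Matrix (Fin N) (Fin t) ℂ)
    (K : Matrix (Fin t) (Fin t) ℂ) [Invertible K]
    (V10 : Matrix (Fin p) (Fin t) ℂ) (hV10 : V10 = Φperpᴴ * H * K)
    [Invertible (V10ᴴ * V10)]
    (PH : Matrix (Fin N) (Fin t) ℂ)
    (hPH : PH = (1 - Q * (Qᴴ * Q)⁻¹ * Qᴴ) * H)
    [Invertible (PHᴴ * PH)] :
    Φperp * (1 - V10 * (V10ᴴ * V10)⁻¹ * V10ᴴ) * Φperpᴴ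
      = (1 - Q * (Qᴴ * Q)⁻¹ * Qᴴ) - PH * (PHᴴ * PH)⁻¹ * PHᴴ := by
  obtain ⟨A, hA⟩ : ∃ A, A = Φperpᴴ * H := ⟨_, rfl⟩
  rw [show Φperpᴴ * H * K = A * K from by rw [hA]] at hV10
  have hPP' : (Φperp * A)ᴴ * (Φperp * A) = Aᴴ * A := by
    rw [conjTranspose_mul]
    rw [show Aᴴ * Φperpᴴ * (Φperp * A) = Aᴴ * (Φperpᴴ * Φperp) * A by
      simp [Matrix.mul_assoc]]
    rw [hortho, Matrix.mul_one]
  have hPHA : PH = Φperp * A := by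
    rw [hPH, ← hspan, Matrix.mul_assoc, ← hA]
  have hPP : PHᴴ * PH = Aᴴ * A := by rw [hPHA, hPP']
  have hVV : V10ᴴ * V10 = Kᴴ * (Aᴴ * A) * K := by
    rw [hV10, conjTranspose_mul]
    simp [Matrix.mul_assoc]
  have hAA : Invertible (Aᴴ * A) := hPP ▸ ‹Invertible (PHᴴ * PH)›
  have hproj : V10 * (V10ᴴ * V10)⁻¹ * V10ᴴ = A * (Aᴴ * A)⁻¹ * Aᴴ := by
    rw [hVV, hV10, Matrix.mul_inv_rev, Matrix.mul_inv_rev, conjTranspose_mul]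
    rw [show A * K * (K⁻¹ * (((Aᴴ * A))⁻¹ * (Kᴴ)⁻¹)) * (Kᴴ * Aᴴ)
        = A * (K * K⁻¹) * (Aᴴ * A)⁻¹ * ((Kᴴ)⁻¹ * Kᴴ) * Aᴴ by
      simp [Matrix.mul_assoc]]
    rw [Matrix.mul_inv_of_invertible, Matrix.inv_mul_of_invertible, Matrix.mul_one, Matrix.mul_one]
  rw [Matrix.mul_sub, Matrix.sub_mul, Matrix.mul_one, hspan, hproj, hPHA, hPP', conjTranspose_mul]
  congr 1
  simp [Matrix.mul_assoc]
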